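/- Weighted energy identity (identity (mt 02) in the proof of the L² estimate): Let ε ∈ (0,1) satisfy ε^(1−n) < R_min, and let f be a classical solution of the ε-Milne problem with geometric correction with continuous source S and arbitrary in-flow data. Then for every η ∈ (0,L): (1/2) d/dη ⟨f, f sin φ⟩(η) + F̃(η) ⟨f, f sin φ⟩(η) = −⟨f − f̄, f − f̄⟩(η) − G(η) ⟨f cos²ψ, f sin φ⟩(η) + ⟨S, f⟩(η). -/

import Mathlib

noncomputable section

open Real Set MeasureTheory

namespace MilneStmt

/-- The boundary-layer thickness `L = ε^(-n)`. -/
def layerL (ε n : ℝ) : ℝ := ε ^ (-n)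

/-- The geometric force `F(η,ψ)`. -/
def force (R₁ R₂ ε η ψ : ℝ) : ℝ :=
  -ε * (Real.sin ψ ^ 2 / (R₁ - ε * η) + Real.cos ψ ^ 2 / (R₂ - ε * η))

/-- The domain `D = [0,L] × [-π/2, π/2] × [-π, π]` of the variables `(η, φ, ψ)`. -/
def milneDomain (L : ℝ) : Set (ℝ × ℝ × ℝ) :=
  Icc (0 : ℝ) L ×ˢ Icc (-(π / 2)) (π / 2) ×ˢ Icc (-π) π

/-- The in-flow set `{(φ,ψ) : sin φ > 0, ψ ∈ [-π,π]}` (with `φ` in the velocity range). -/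
def inflowSet : Set (ℝ × ℝ) :=
  {q | 0 < Real.sin q.1 ∧ q.1 ∈ Icc (-(π / 2)) (π / 2) ∧ q.2 ∈ Icc (-π) π}

/-- The angular average `f̄(η)`. -/
def angAvg (f : ℝ × ℝ × ℝ → ℝ) (η : ℝ) : ℝ :=
  (1 / (4 * π)) * ∫ ψ in (-π)..π, ∫ φ in (-(π / 2))..(π / 2), f (η, φ, ψ) * Real.cos φ

/-- Partial derivative in `η`. -/
def dEta (g : ℝ × ℝ × ℝ → ℝ) (p : ℝ × ℝ × ℝ) : ℝ :=
  deriv (fun t => g (t, p.2.1, p.2.2)) p.1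

/-- Partial derivative in `φ`. -/
def dPhi (g : ℝ × ℝ × ℝ → ℝ) (p : ℝ × ℝ × ℝ) : ℝ :=
  deriv (fun t => g (p.1, t, p.2.2)) p.2.1

/-- Partial derivative in `ψ`. -/
def dPsi (g : ℝ × ℝ × ℝ → ℝ) (p : ℝ × ℝ × ℝ) : ℝ :=
  deriv (fun t => g (p.1, p.2.1, t)) p.2.2

/-- A classical solution of the ε-Milne problem with geometric correction,
with in-flow data `h` and source `S`. -/
structure IsMilneSolution (R₁ R₂ ε n : ℝ) (h : ℝ → ℝ → ℝ) (S : ℝ × ℝ × ℝ → ℝ)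
    (f : ℝ × ℝ × ℝ → ℝ) : Prop where
  smooth : ContDiffOn ℝ 1 f (milneDomain (layerL ε n))
  eqn : ∀ p ∈ interior (milneDomain (layerL ε n)),
    Real.sin p.2.1 * dEta f p + force R₁ R₂ ε p.1 p.2.2 * Real.cos p.2.1 * dPhi f p
      + f p - angAvg f p.1 = S p
  inflow : ∀ q ∈ inflowSet, f (0, q.1, q.2) = h q.1 q.2
  reflect : ∀ φ ψ : ℝ, f (layerL ε n, φ, ψ) = f (layerL ε n, -φ, ψ)

/-- The weighted `L²` norm on `D`. -/
def l2Norm (L : ℝ) (g : ℝ × ℝ × ℝ → ℝ) : ℝ :=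
  Real.sqrt (∫ η in (0 : ℝ)..L, ∫ ψ in (-π)..π, ∫ φ in (-(π / 2))..(π / 2),
    g (η, φ, ψ) ^ 2 * Real.cos φ)

/-- The `L^∞` norm (sup over `D`). -/
def linfNorm (L : ℝ) (g : ℝ × ℝ × ℝ → ℝ) : ℝ :=
  ⨆ p ∈ milneDomain L, |g p|

/-- The `L^∞` norm over the in-flow boundary. -/
def inflowLinf (g : ℝ → ℝ → ℝ) : ℝ :=
  ⨆ q ∈ inflowSet, |g q.1 q.2|

/-- The limit value `f_L = (3/(4π)) ∫∫ f(L,φ,ψ) sin²φ cos φ dφ dψ`. -/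
def limitValue (L : ℝ) (f : ℝ × ℝ × ℝ → ℝ) : ℝ :=
  (3 / (4 * π)) * ∫ ψ in (-π)..π, ∫ φ in (-(π / 2))..(π / 2),
    f (L, φ, ψ) * Real.sin φ ^ 2 * Real.cos φ

/-- The data bounds with constants `K` and `M` for in-flow data `h` and source `S`. -/
structure DataBounds (K M L : ℝ) (h : ℝ → ℝ → ℝ) (S : ℝ × ℝ × ℝ → ℝ) : Prop where
  hSmooth : ContDiffOn ℝ 1 (fun q : ℝ × ℝ => h q.1 q.2) inflowSet
  hBound : ∀ q ∈ inflowSet,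
    |h q.1 q.2| + |deriv (fun t => h t q.2) q.1| + |deriv (fun t => h q.1 t) q.2| ≤ M
  sSmooth : ContDiffOn ℝ 1 S (milneDomain L)
  sBound : ∀ p ∈ milneDomain L,
    Real.exp (K * p.1) * (|S p| + |dEta S p| + |dPhi S p| + |dPsi S p|) ≤ M

/-- The angular pairing `⟨a, b⟩(η) = ∫∫ a b cos φ dφ dψ`. -/
def brkt (a b : ℝ × ℝ × ℝ → ℝ) (η : ℝ) : ℝ :=
  ∫ ψ in (-π)..π, ∫ φ in (-(π / 2))..(π / 2), a (η, φ, ψ) * b (η, φ, ψ) * Real.cos φ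

/-- `F̃(η) = -ε/(R₁ - εη)`. -/
def Ftilde (R₁ ε η : ℝ) : ℝ := -ε / (R₁ - ε * η)

/-- `G(η) = -ε(R₁ - R₂)/((R₁ - εη)(R₂ - εη))`. -/
def Gfun (R₁ R₂ ε η : ℝ) : ℝ := -(ε * (R₁ - R₂)) / ((R₁ - ε * η) * (R₂ - ε * η))

/-!
Multiply the transport equation by `f cos φ` and integrate over the angles at fixed `η`.
Differentiating under the integral sign (legitimate since `f` is `C¹` on the compact domain),
the `η`-term is `½ d/dη ⟨f, f sin φ⟩`. The collision term splits as
`⟨f - f̄, f - f̄⟩ + f̄ ⟨f - f̄, 1⟩`, and the last pairing vanishes by definition of the average.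
In the force term, `f ∂_φ f cos² φ = ½ ∂_φ (f² cos² φ) + f² sin φ cos φ`, and the exact
derivative integrates to zero in `φ` because `cos (±π/2) = 0`; splitting
`F = F̃ + G cos² ψ` gives the two remaining pairings.
-/

open scoped Topology

theorem intervalIntegral_intervalIntegral_eq_setIntegral_Ioo_prod {a b c d : ℝ}
    {s : ℝ × ℝ → ℝ} (hab : a ≤ b) (hcd : c ≤ d)
    (hs : ContinuousOn s (Icc a b ×ˢ Icc c d)) :
    ∫ x in a..b, ∫ y in c..d, s (x, y) = ∫ p in Ioo a b ×ˢ Ioo c d, s p := by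
  have hint : IntegrableOn s (Ioo a b ×ˢ Ioo c d) (volume.prod volume) :=
    (hs.integrableOn_compact (isCompact_Icc.prod isCompact_Icc)).mono_set
      (prod_mono Ioo_subset_Icc_self Ioo_subset_Icc_self)
  rw [Measure.volume_eq_prod, setIntegral_prod s hint, intervalIntegral.integral_of_le hab,
    integral_Ioc_eq_integral_Ioo]
  simp_rw [intervalIntegral.integral_of_le hcd, integral_Ioc_eq_integral_Ioo]

theorem hasDerivAt_setIntegral_of_continuousOn {α : Type*} [TopologicalSpace α]
    [MeasurableSpace α] [OpensMeasurableSpace α] {μ : Measure α} [IsFiniteMeasureOnCompacts μ]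
    {F F' : ℝ → α → ℝ} {s K : Set α} {a b t₀ : ℝ}
    (hK : IsCompact K) (hs : MeasurableSet s) (hsK : s ⊆ K) (ht₀ : t₀ ∈ Ioo a b)
    (hF : ∀ t ∈ Ioo a b, ContinuousOn (F t) K)
    (hF' : ContinuousOn (Function.uncurry F') (Icc a b ×ˢ K))
    (hderiv : ∀ t ∈ Ioo a b, ∀ x ∈ s, HasDerivAt (F · x) (F' t x) t) :
    HasDerivAt (fun t => ∫ x in s, F t x ∂μ) (∫ x in s, F' t₀ x ∂μ) t₀ := by
  obtain ⟨C, hC⟩ := (isCompact_Icc.prod hK).exists_bound_of_continuousOn hF'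
  have hsfin : μ s ≠ ⊤ := (measure_mono hsK).trans_lt hK.measure_lt_top |>.ne
  have hF't₀ : ContinuousOn (F' t₀) K :=
    hF'.comp (Continuous.prodMk_right t₀).continuousOn
      fun x hx => ⟨Ioo_subset_Icc_self ht₀, hx⟩
  refine (hasDerivAt_integral_of_dominated_loc_of_deriv_le (bound := fun _ => C)
    (Ioo_mem_nhds ht₀.1 ht₀.2) ?_ ?_ ?_ ?_ ?_ ?_).2
  · filter_upwards [Ioo_mem_nhds ht₀.1 ht₀.2] with t ht
    exact (hF t ht).aestronglyMeasurable_of_subset_isCompact hK hs hsK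
  · exact (hF t₀ ht₀).integrableOn_of_subset_isCompact hK hs hsK hsfin
  · exact hF't₀.aestronglyMeasurable_of_subset_isCompact hK hs hsK
  · filter_upwards [ae_restrict_mem hs] with x hx t ht
    exact hC (t, x) ⟨Ioo_subset_Icc_self ht, hsK hx⟩
  · exact integrableOn_const hsfin
  · filter_upwards [ae_restrict_mem hs] with x hx t ht
    exact hderiv t ht x hx

theorem integral_mul_mul_deriv_eq_of_eq_zero {a b : ℝ} {g g' w w' : ℝ → ℝ} (hab : a ≤ b)
    (hg : ContinuousOn g (Icc a b)) (hg' : ContinuousOn g' (Icc a b))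
    (hgd : ∀ x ∈ Ioo a b, HasDerivAt g (g' x) x)
    (hw : ∀ x ∈ Icc a b, HasDerivAt w (w' x) x) (hw' : ContinuousOn w' (Icc a b))
    (hwa : w a = 0) (hwb : w b = 0) :
    ∫ x in a..b, w x * (g x * g' x) = -(1 / 2) * ∫ x in a..b, w' x * g x ^ 2 := by
  have hwc : ContinuousOn w (Icc a b) := fun x hx => (hw x hx).continuousAt.continuousWithinAt
  have hint₁ : IntervalIntegrable (fun x => w x * (g x * g' x)) volume a b :=
    (hwc.mul (hg.mul hg')).intervalIntegrable_of_Icc hab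
  have hint₂ : IntervalIntegrable (fun x => w' x * g x ^ 2) volume a b :=
    (hw'.mul (hg.pow 2)).intervalIntegrable_of_Icc hab
  have hd : ∀ x ∈ Ioo a b, HasDerivAt (fun x => w x * g x ^ 2 / 2)
      (w' x * g x ^ 2 / 2 + w x * (g x * g' x)) x := fun x hx =>
    (((hw x (Ioo_subset_Icc_self hx)).mul ((hgd x hx).fun_pow 2)).div_const 2).congr_deriv
      (by ring)
  -- `w g² / 2` vanishes at both endpoints
  have hFTC := intervalIntegral.integral_eq_sub_of_hasDeriv_right_of_le hab
    (f := fun x => w x * g x ^ 2 / 2) ((hwc.mul (hg.pow 2)).div_const 2)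
    (fun x hx => (hd x hx).hasDerivWithinAt) ((hint₂.div_const 2).add hint₁)
  rw [intervalIntegral.integral_add (hint₂.div_const 2) hint₁, intervalIntegral.integral_div,
    hwa, hwb] at hFTC
  linarith

/-- Angles `(ψ, φ)` in the order of integration of `brkt`; the rectangle is open because the
transport equation only holds in the interior of the domain. -/
def angularRect : Set (ℝ × ℝ) := Ioo (-π) π ×ˢ Ioo (-(π / 2)) (π / 2)

def closedAngularRect : Set (ℝ × ℝ) := Icc (-π) π ×ˢ Icc (-(π / 2)) (π / 2)

theorem isCompact_closedAngularRect : IsCompact closedAngularRect :=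
  isCompact_Icc.prod isCompact_Icc

theorem angularRect_subset_closedAngularRect : angularRect ⊆ closedAngularRect :=
  prod_mono Ioo_subset_Icc_self Ioo_subset_Icc_self

theorem measurableSet_angularRect : MeasurableSet angularRect :=
  measurableSet_Ioo.prod measurableSet_Ioo

section AngularRect

variable {u : ℝ × ℝ → ℝ}

theorem integrableOn_angularRect_of_continuousOn (hu : ContinuousOn u closedAngularRect) :
    IntegrableOn u angularRect :=
  (hu.integrableOn_compact isCompact_closedAngularRect).mono_set
    angularRect_subset_closedAngularRect

theorem intervalIntegral_angular_eq_setIntegral (hu : ContinuousOn u closedAngularRect) :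
    ∫ ψ in (-π)..π, ∫ φ in (-(π / 2))..(π / 2), u (ψ, φ) = ∫ a in angularRect, u a :=
  intervalIntegral_intervalIntegral_eq_setIntegral_Ioo_prod (by linarith [pi_pos])
    (by linarith [pi_pos]) hu

theorem setIntegral_angularRect_cos : ∫ a in angularRect, cos a.2 = 4 * π := by
  rw [← intervalIntegral_angular_eq_setIntegral (by fun_prop)]
  simp only [integral_cos, sin_pi_div_two, sin_neg, intervalIntegral.integral_const, smul_eq_mul]
  ring

theorem setIntegral_angularRect_sub_mean_mul_cos (hu : ContinuousOn u closedAngularRect) :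
    ∫ a in angularRect, (u a - 1 / (4 * π) * ∫ b in angularRect, u b * cos b.2) * cos a.2
      = 0 := by
  simp_rw [sub_mul]
  rw [integral_sub (integrableOn_angularRect_of_continuousOn (by fun_prop))
      (integrableOn_angularRect_of_continuousOn (by fun_prop)),
    integral_const_mul, setIntegral_angularRect_cos]
  field_simp
  ring

theorem setIntegral_angularRect_mul_deriv_mul_cos_sq {uφ : ℝ × ℝ → ℝ} {w : ℝ → ℝ}
    (hw : Continuous w) (hu : ContinuousOn u closedAngularRect)
    (huφ : ContinuousOn uφ closedAngularRect)
    (hφ : ∀ a ∈ angularRect, HasDerivAt (fun φ => u (a.1, φ)) (uφ a) a.2) :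
    ∫ a in angularRect, w a.1 * (u a * uφ a * cos a.2 ^ 2)
      = ∫ a in angularRect, w a.1 * (u a ^ 2 * sin a.2 * cos a.2) := by
  have hint : ∀ {v : ℝ × ℝ → ℝ}, ContinuousOn v closedAngularRect →
      IntegrableOn v (Ioo (-π) π ×ˢ Ioo (-(π / 2)) (π / 2)) (volume.prod volume) :=
    fun hv => integrableOn_angularRect_of_continuousOn hv
  rw [angularRect, Measure.volume_eq_prod,
    setIntegral_prod (fun a => w a.1 * (u a * uφ a * cos a.2 ^ 2)) (hint (by fun_prop)),
    setIntegral_prod (fun a => w a.1 * (u a ^ 2 * sin a.2 * cos a.2)) (hint (by fun_prop))]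
  refine setIntegral_congr_fun measurableSet_Ioo fun ψ hψ => ?_
  have hπ : -(π / 2) ≤ π / 2 := by linarith [pi_pos]
  have hslice : ∀ {v : ℝ × ℝ → ℝ}, ContinuousOn v closedAngularRect →
      ContinuousOn (fun φ => v (ψ, φ)) (Icc (-(π / 2)) (π / 2)) := fun hv =>
    hv.comp (Continuous.prodMk_right ψ).continuousOn
      fun φ hφ => ⟨Ioo_subset_Icc_self hψ, hφ⟩
  simp only [integral_const_mul, ← integral_Ioc_eq_integral_Ioo,
    ← intervalIntegral.integral_of_le hπ]
  congr 1
  calc ∫ φ in -(π / 2)..π / 2, u (ψ, φ) * uφ (ψ, φ) * cos φ ^ 2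
      = ∫ φ in -(π / 2)..π / 2, cos φ ^ 2 * (u (ψ, φ) * uφ (ψ, φ)) := by
        congr 1; funext φ; ring
    _ = -(1 / 2) * ∫ φ in -(π / 2)..π / 2, 2 * cos φ * -sin φ * u (ψ, φ) ^ 2 :=
        integral_mul_mul_deriv_eq_of_eq_zero hπ (hslice hu) (hslice huφ)
          (fun x hx => hφ (ψ, x) ⟨hψ, hx⟩)
          (fun φ _ => ((hasDerivAt_cos φ).fun_pow 2).congr_deriv (by ring))
          (by fun_prop) (by simp) (by simp)
    _ = ∫ φ in -(π / 2)..π / 2, u (ψ, φ) ^ 2 * sin φ * cos φ := by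
        rw [← intervalIntegral.integral_const_mul]; congr 1; funext φ; ring

end AngularRect

theorem angular_energy_identity {u uη uφ s : ℝ × ℝ → ℝ} {A B m : ℝ}
    (hu : ContinuousOn u closedAngularRect)
    (huφ : ContinuousOn uφ closedAngularRect) (hs : ContinuousOn s closedAngularRect)
    (hφ : ∀ a ∈ angularRect, HasDerivAt (fun φ => u (a.1, φ)) (uφ a) a.2)
    (hm : m = 1 / (4 * π) * ∫ a in angularRect, u a * cos a.2)
    (hpde : ∀ a ∈ angularRect,
      sin a.2 * uη a + (A + B * cos a.1 ^ 2) * cos a.2 * uφ a + u a - m = s a) :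
    (∫ a in angularRect, u a * uη a * sin a.2 * cos a.2)
        + A * ∫ a in angularRect, u a * (u a * sin a.2) * cos a.2
      = -(∫ a in angularRect, (u a - m) * (u a - m) * cos a.2)
        - B * (∫ a in angularRect, u a * cos a.1 ^ 2 * (u a * sin a.2) * cos a.2)
        + ∫ a in angularRect, s a * u a * cos a.2 := by
  have hint : ∀ {v : ℝ × ℝ → ℝ}, ContinuousOn v closedAngularRect → IntegrableOn v angularRect :=
    integrableOn_angularRect_of_continuousOn
  have hmean : ∫ a in angularRect, (u a - m) * cos a.2 = 0 :=
    hm ▸ setIntegral_angularRect_sub_mean_mul_cos hu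
  have hforce : ∫ a in angularRect, (A + B * cos a.1 ^ 2) * (u a * uφ a * cos a.2 ^ 2)
      = A * (∫ a in angularRect, u a * (u a * sin a.2) * cos a.2)
        + B * ∫ a in angularRect, u a * cos a.1 ^ 2 * (u a * sin a.2) * cos a.2 := by
    rw [setIntegral_angularRect_mul_deriv_mul_cos_sq (w := fun ψ => A + B * cos ψ ^ 2)
        (by fun_prop) hu huφ hφ,
      ← integral_const_mul, ← integral_const_mul,
      ← integral_add (hint (by fun_prop)) (hint (by fun_prop))]
    refine setIntegral_congr_fun measurableSet_angularRect fun a _ => by ring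
  -- multiply the transport equation by `u cos φ`
  have hpointwise : ∫ a in angularRect, u a * uη a * sin a.2 * cos a.2
      = ∫ a in angularRect, (s a * u a * cos a.2 - (u a - m) * (u a - m) * cos a.2
          - m * ((u a - m) * cos a.2)
          - (A + B * cos a.1 ^ 2) * (u a * uφ a * cos a.2 ^ 2)) :=
    setIntegral_congr_fun measurableSet_angularRect fun a ha => by
      linear_combination (u a * cos a.2) * hpde a ha
  rw [hpointwise, integral_sub, integral_sub, integral_sub, integral_const_mul, hmean, hforce]
  · ring
  all_goals exact hint (by fun_prop)


theorem force_eq_Ftilde_add_Gfun {R₁ R₂ ε η : ℝ} (h₁ : R₁ - ε * η ≠ 0) (h₂ : R₂ - ε * η ≠ 0)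
    (ψ : ℝ) : force R₁ R₂ ε η ψ = Ftilde R₁ ε η + Gfun R₁ R₂ ε η * cos ψ ^ 2 := by
  rw [force, Ftilde, Gfun, sin_sq]
  field_simp
  ring

theorem sub_mul_pos_of_le_layerL {R ε n η : ℝ} (hε : 0 < ε) (hεn : ε ^ (1 - n) < R)
    (hη : η ≤ layerL ε n) : 0 < R - ε * η := by
  have hεL : ε * layerL ε n = ε ^ (1 - n) := by
    rw [layerL, sub_eq_add_neg, rpow_add hε, rpow_one]
  nlinarith [mul_le_mul_of_nonneg_left hη hε.le]

section MilneDomain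

variable {L η : ℝ}

theorem interior_milneDomain :
    interior (milneDomain L) = Ioo 0 L ×ˢ Ioo (-(π / 2)) (π / 2) ×ˢ Ioo (-π) π := by
  simp only [milneDomain, interior_prod_eq, interior_Icc]

theorem uniqueDiffOn_milneDomain (hL : 0 < L) : UniqueDiffOn ℝ (milneDomain L) :=
  (uniqueDiffOn_Icc hL).prod
    ((uniqueDiffOn_Icc (by linarith [pi_pos])).prod (uniqueDiffOn_Icc (by linarith [pi_pos])))

theorem mem_interior_milneDomain {a : ℝ × ℝ} (hη : η ∈ Ioo 0 L) (ha : a ∈ angularRect) :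
    (η, a.2, a.1) ∈ interior (milneDomain L) := by
  rw [interior_milneDomain]
  exact ⟨hη, ha.2, ha.1⟩

theorem continuousOn_milne_uncurry {u : ℝ × ℝ × ℝ → ℝ} (hu : ContinuousOn u (milneDomain L)) :
    ContinuousOn (fun q : ℝ × ℝ × ℝ => u (q.1, q.2.2, q.2.1)) (Icc 0 L ×ˢ closedAngularRect) :=
  hu.comp (by fun_prop) fun _ hq => ⟨hq.1, hq.2.2, hq.2.1⟩

theorem continuousOn_milne_slice {u : ℝ × ℝ × ℝ → ℝ} (hu : ContinuousOn u (milneDomain L))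
    (hη : η ∈ Icc 0 L) : ContinuousOn (fun a : ℝ × ℝ => u (η, a.2, a.1)) closedAngularRect :=
  (continuousOn_milne_uncurry hu).comp (Continuous.prodMk_right η).continuousOn
    fun _ ha => ⟨hη, ha⟩

theorem continuousOn_fderivWithin_milneDomain_apply {f : ℝ × ℝ × ℝ → ℝ}
    (hf : ContDiffOn ℝ 1 f (milneDomain L)) (hL : 0 < L) (v : ℝ × ℝ × ℝ) :
    ContinuousOn (fun p => fderivWithin ℝ f (milneDomain L) p v) (milneDomain L) :=
  (hf.continuousOn_fderivWithin (uniqueDiffOn_milneDomain hL) le_rfl).clm_apply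
    continuousOn_const

end MilneDomain

theorem brkt_eq_setIntegral {a b : ℝ × ℝ × ℝ → ℝ} {η : ℝ}
    (ha : ContinuousOn (fun x : ℝ × ℝ => a (η, x.2, x.1)) closedAngularRect)
    (hb : ContinuousOn (fun x : ℝ × ℝ => b (η, x.2, x.1)) closedAngularRect) :
    brkt a b η = ∫ x in angularRect, a (η, x.2, x.1) * b (η, x.2, x.1) * cos x.2 :=
  intervalIntegral_angular_eq_setIntegral
    (u := fun x => a (η, x.2, x.1) * b (η, x.2, x.1) * cos x.2) ((ha.mul hb).mul (by fun_prop))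

theorem angAvg_eq_setIntegral {f : ℝ × ℝ × ℝ → ℝ} {η : ℝ}
    (hf : ContinuousOn (fun x : ℝ × ℝ => f (η, x.2, x.1)) closedAngularRect) :
    angAvg f η = 1 / (4 * π) * ∫ x in angularRect, f (η, x.2, x.1) * cos x.2 := by
  rw [angAvg, intervalIntegral_angular_eq_setIntegral
    (u := fun x => f (η, x.2, x.1) * cos x.2) (hf.mul (by fun_prop))]

theorem hasFDerivAt_fderivWithin_of_mem_interior {E F : Type*} [NormedAddCommGroup E]
    [NormedSpace ℝ E] [NormedAddCommGroup F] [NormedSpace ℝ F] {f : E → F} {s : Set E} {p : E}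
    (hf : ContDiffOn ℝ 1 f s) (hp : p ∈ interior s) :
    HasFDerivAt f (fderivWithin ℝ f s p) p := by
  have hs : s ∈ 𝓝 p := mem_interior_iff_mem_nhds.1 hp
  rw [fderivWithin_of_mem_nhds hs]
  exact ((hf.differentiableOn one_ne_zero).differentiableAt hs).hasFDerivAt

theorem hasDerivAt_eta_of_hasFDerivAt {f : ℝ × ℝ × ℝ → ℝ} {f' : ℝ × ℝ × ℝ →L[ℝ] ℝ}
    {p : ℝ × ℝ × ℝ} (hf : HasFDerivAt f f' p) :
    HasDerivAt (fun t => f (t, p.2.1, p.2.2)) (f' (1, 0, 0)) p.1 :=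
  hf.comp_hasDerivAt p.1 ((hasDerivAt_id p.1).prodMk (hasDerivAt_const _ _))

theorem hasDerivAt_phi_of_hasFDerivAt {f : ℝ × ℝ × ℝ → ℝ} {f' : ℝ × ℝ × ℝ →L[ℝ] ℝ}
    {p : ℝ × ℝ × ℝ} (hf : HasFDerivAt f f' p) :
    HasDerivAt (fun t => f (p.1, t, p.2.2)) (f' (0, 1, 0)) p.2.1 :=
  hf.comp_hasDerivAt p.2.1
    ((hasDerivAt_const _ _).prodMk ((hasDerivAt_id _).prodMk (hasDerivAt_const _ _)))

theorem IsMilneSolution.eqn_fderivWithin {R₁ R₂ ε n : ℝ} {h : ℝ → ℝ → ℝ}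
    {S f : ℝ × ℝ × ℝ → ℝ} (hf : IsMilneSolution R₁ R₂ ε n h S f) {p : ℝ × ℝ × ℝ}
    (hp : p ∈ interior (milneDomain (layerL ε n))) :
    sin p.2.1 * fderivWithin ℝ f (milneDomain (layerL ε n)) p (1, 0, 0)
      + force R₁ R₂ ε p.1 p.2.2 * cos p.2.1
        * fderivWithin ℝ f (milneDomain (layerL ε n)) p (0, 1, 0)
      + f p - angAvg f p.1 = S p := by
  have hfd := hasFDerivAt_fderivWithin_of_mem_interior hf.smooth hp
  rw [← (hasDerivAt_eta_of_hasFDerivAt hfd).deriv, ← (hasDerivAt_phi_of_hasFDerivAt hfd).deriv]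
  exact hf.eqn p hp

theorem hasDerivAt_brkt_self_mul_sin {f : ℝ × ℝ × ℝ → ℝ} {L η : ℝ}
    (hf : ContDiffOn ℝ 1 f (milneDomain L)) (hη : η ∈ Ioo 0 L) :
    HasDerivAt (brkt f fun p => f p * sin p.2.1)
      (2 * ∫ x in angularRect, f (η, x.2, x.1)
        * fderivWithin ℝ f (milneDomain L) (η, x.2, x.1) (1, 0, 0) * sin x.2 * cos x.2) η := by
  have hfc := continuousOn_milne_uncurry hf.continuousOn
  have hf'c := continuousOn_milne_uncurry <|
    continuousOn_fderivWithin_milneDomain_apply hf (hη.1.trans hη.2) (1, 0, 0)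
  have hslice : ∀ t ∈ Icc 0 L,
      ContinuousOn (fun x : ℝ × ℝ => f (t, x.2, x.1)) closedAngularRect :=
    fun t ht => continuousOn_milne_slice hf.continuousOn ht
  have heq : (brkt f fun p => f p * sin p.2.1) =ᶠ[𝓝 η]
      fun t => ∫ x in angularRect, f (t, x.2, x.1) * (f (t, x.2, x.1) * sin x.2) * cos x.2 := by
    filter_upwards [Ioo_mem_nhds hη.1 hη.2] with t ht
    exact brkt_eq_setIntegral (hslice t (Ioo_subset_Icc_self ht))
      ((hslice t (Ioo_subset_Icc_self ht)).mul (by fun_prop))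
  rw [← integral_const_mul]
  refine (hasDerivAt_setIntegral_of_continuousOn
    (F := fun t x => f (t, x.2, x.1) * (f (t, x.2, x.1) * sin x.2) * cos x.2)
    (F' := fun t x => 2 * (f (t, x.2, x.1)
      * fderivWithin ℝ f (milneDomain L) (t, x.2, x.1) (1, 0, 0) * sin x.2 * cos x.2))
    isCompact_closedAngularRect measurableSet_angularRect angularRect_subset_closedAngularRect hη
    (fun t ht => ((hslice t (Ioo_subset_Icc_self ht)).mul
      ((hslice t (Ioo_subset_Icc_self ht)).mul (by fun_prop))).mul (by fun_prop))
    ((((hfc.mul hf'c).mul (by fun_prop)).mul (by fun_prop)).const_smul (2 : ℝ))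
    fun t ht x hx => ?_).congr_of_eventuallyEq heq
  have hd := hasDerivAt_eta_of_hasFDerivAt
    (hasFDerivAt_fderivWithin_of_mem_interior hf (mem_interior_milneDomain ht hx))
  exact ((hd.mul (hd.mul_const _)).mul_const _).congr_deriv (by ring)

theorem milne_energy_identity_general (R₁ R₂ n ε : ℝ) (hε : ε ∈ Ioo (0 : ℝ) 1)
    (hεn : ε ^ (1 - n) < min R₁ R₂)
    (h : ℝ → ℝ → ℝ) (S f : ℝ × ℝ × ℝ → ℝ)
    (hS : ContinuousOn S (milneDomain (layerL ε n)))
    (hf : IsMilneSolution R₁ R₂ ε n h S f) :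
    ∀ η ∈ Ioo (0 : ℝ) (layerL ε n),
      (1 / 2) * deriv (brkt f (fun p => f p * Real.sin p.2.1)) η
          + Ftilde R₁ ε η * brkt f (fun p => f p * Real.sin p.2.1) η
        = -brkt (fun p => f p - angAvg f p.1) (fun p => f p - angAvg f p.1) η
          - Gfun R₁ R₂ ε η * brkt (fun p => f p * Real.cos p.2.2 ^ 2)
              (fun p => f p * Real.sin p.2.1) η
          + brkt S f η := by
  intro η hη
  have hηD : η ∈ Icc 0 (layerL ε n) := Ioo_subset_Icc_self hη
  have hu := continuousOn_milne_slice hf.smooth.continuousOn hηD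
  have huφ := continuousOn_milne_slice
    (continuousOn_fderivWithin_milneDomain_apply hf.smooth (hη.1.trans hη.2) (0, 1, 0)) hηD
  have h₁ := sub_mul_pos_of_le_layerL hε.1 (hεn.trans_le (min_le_left _ _)) hη.2.le
  have h₂ := sub_mul_pos_of_le_layerL hε.1 (hεn.trans_le (min_le_right _ _)) hη.2.le
  have key := angular_energy_identity (A := Ftilde R₁ ε η) (B := Gfun R₁ R₂ ε η) hu huφ
    (continuousOn_milne_slice hS hηD)
    (fun a ha => hasDerivAt_phi_of_hasFDerivAt
      (hasFDerivAt_fderivWithin_of_mem_interior hf.smooth (mem_interior_milneDomain hη ha)))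
    (angAvg_eq_setIntegral hu)
    (fun a ha => by
      simpa only [force_eq_Ftilde_add_Gfun h₁.ne' h₂.ne'] using
        hf.eqn_fderivWithin (mem_interior_milneDomain hη ha))
  have hdev := hu.fun_sub (continuousOn_const (c := angAvg f η))
  rw [(hasDerivAt_brkt_self_mul_sin hf.smooth hη).deriv,
    brkt_eq_setIntegral hu (hu.mul (by fun_prop)), brkt_eq_setIntegral hdev hdev,
    brkt_eq_setIntegral (hu.mul (by fun_prop)) (hu.mul (by fun_prop)),
    brkt_eq_setIntegral (continuousOn_milne_slice hS hηD) hu]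
  dsimp only at key ⊢
  linear_combination key

/-- identity (mt 02): weighted energy identity. -/
theorem milne_energy_identity (R₁ R₂ n ε : ℝ) (hR₁ : 0 < R₁) (hR₂ : 0 < R₂)
    (hn : n ∈ Ioo (0 : ℝ) (1 / 2)) (hε : ε ∈ Ioo (0 : ℝ) 1)
    (hεn : ε ^ (1 - n) < min R₁ R₂)
    (h : ℝ → ℝ → ℝ) (S f : ℝ × ℝ × ℝ → ℝ)
    (hS : ContinuousOn S (milneDomain (layerL ε n)))
    (hf : IsMilneSolution R₁ R₂ ε n h S f) :
    ∀ η ∈ Ioo (0 : ℝ) (layerL ε n),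
      (1 / 2) * deriv (brkt f (fun p => f p * Real.sin p.2.1)) η
          + Ftilde R₁ ε η * brkt f (fun p => f p * Real.sin p.2.1) η
        = -brkt (fun p => f p - angAvg f p.1) (fun p => f p - angAvg f p.1) η
          - Gfun R₁ R₂ ε η * brkt (fun p => f p * Real.cos p.2.2 ^ 2)
              (fun p => f p * Real.sin p.2.1) η
          + brkt S f η :=
  milne_energy_identity_general R₁ R₂ n ε hε hεn h S f hS hf

end MilneStmt
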